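/- Inversion: for all formulas χ₀, χ₁ there are strongly preserving functions inv_⊥, linv⁰_{χ₀→χ₁}, linv¹_{χ₀→χ₁}, rinv_{χ₀→χ₁} from proofs in G∞ℓK⁺_s + Cut to proofs in G∞ℓK⁺_s + Cut such that: if π proves Γ ⇒_s Δ,⊥ then inv_⊥(π) proves Γ ⇒_s Δ; if π proves Γ,χ₀→χ₁ ⇒_s Δ then linv⁰_{χ₀→χ₁}(π) proves Γ ⇒_s Δ,χ₀ and linv¹_{χ₀→χ₁}(π) proves Γ,χ₁ ⇒_s Δ; and if π proves Γ ⇒_s Δ,χ₀→χ₁ then rinv_{χ₀→χ₁}(π) proves Γ,χ₀ ⇒_s Δ,χ₁. -/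

import Mathlib

/-! Formulas of the modal language with ⊥, →, □ and the master modality ⊞. -/
inductive Fml : Type
  | var : ℕ → Fml
  | bot : Fml
  | imp : Fml → Fml → Fml
  | box : Fml → Fml
  | mbox : Fml → Fml

/-- The size of a formula (number of symbols). -/
def Fml.size : Fml → ℕ
  | .var _ => 1
  | .bot => 1
  | .imp a b => a.size + b.size + 1
  | .box a => a.size + 1
  | .mbox a => a.size + 1

/-- Annotations: either a formula in focus or the symbol ∘ (unfocused). -/
inductive Ann : Type
  | o : Ann
  | fml : Fml → Ann

abbrev Msf := Multiset Fml

/-- Natural (Hessenberg) addition of ordinals, as defined in the older Mathlib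
(`Ordinal.nadd`, since removed from Mathlib). -/
noncomputable def Ordinal.nadd.{u} (a b : Ordinal.{u}) : Ordinal.{u} :=
  max (⨆ x : Set.Iio a, Order.succ (Ordinal.nadd x.1 b))
    (⨆ x : Set.Iio b, Order.succ (Ordinal.nadd a x.1))
termination_by (a, b)
decreasing_by all_goals cases x; decreasing_tactic

/-- `Γ, ⊞Γ`. -/
def dne (P : Msf) : Msf := P + P.map Fml.mbox

/-- An annotated sequent `Γ ⇒_s Δ`. -/
structure Sequent where
  left : Msf
  ann : Ann
  right : Msf

/-- The condition for being an annotated sequent: if the annotation is a formula `φ`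
then `⊞φ` occurs on the right. -/
def Sequent.ok (S : Sequent) : Prop :=
  ∀ φ : Fml, S.ann = Ann.fml φ → Fml.mbox φ ∈ S.right

/-- Rule tags: the rule applied at a node of a derivation tree, together with all the
data of the rule instance. -/
inductive Tag : Type
  | ax (Γ : Msf) (p : ℕ) (Δ : Msf) (s : Ann)
  | axBot (Γ : Msf) (Δ : Msf) (s : Ann)
  | impL (Γ : Msf) (φ ψ : Fml) (Δ : Msf) (s : Ann)
  | impR (Γ : Msf) (φ ψ : Fml) (Δ : Msf) (s : Ann)
  | box (Sg Γ P Δ : Msf) (φ : Fml) (s : Ann)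
  | mboxF (Sg Γ P Δ : Msf) (φ : Fml)
  | mboxU (Sg Γ P Δ : Msf) (φ : Fml) (s : Ann)
  | cut (Γ Δ : Msf) (χ : Fml) (s : Ann)

/-- Number of children (premises and witnesses) of each rule. -/
def Tag.arity : Tag → ℕ
  | .ax .. => 0
  | .axBot .. => 0
  | .impL .. => 2
  | .impR .. => 1
  | .box .. => 1
  | .mboxF .. => 2
  | .mboxU .. => 2
  | .cut .. => 2

/-- Conclusion sequent of a rule instance. -/
def Tag.concl : Tag → Sequent
  | .ax Γ p Δ s => ⟨Fml.var p ::ₘ Γ, s, Fml.var p ::ₘ Δ⟩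
  | .axBot Γ Δ s => ⟨Fml.bot ::ₘ Γ, s, Δ⟩
  | .impL Γ φ ψ Δ s => ⟨Fml.imp φ ψ ::ₘ Γ, s, Δ⟩
  | .impR Γ φ ψ Δ s => ⟨Γ, s, Fml.imp φ ψ ::ₘ Δ⟩
  | .box Sg Γ P Δ φ s => ⟨Sg + Γ.map Fml.box + P.map Fml.mbox, s, Fml.box φ ::ₘ Δ⟩
  | .mboxF Sg Γ P Δ φ => ⟨Sg + Γ.map Fml.box + P.map Fml.mbox, Ann.fml φ, Fml.mbox φ ::ₘ Δ⟩
  | .mboxU Sg Γ P Δ φ s => ⟨Sg + Γ.map Fml.box + P.map Fml.mbox, s, Fml.mbox φ ::ₘ Δ⟩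
  | .cut Γ Δ _ s => ⟨Γ, s, Δ⟩

/-- The `i`-th premise/witness sequent of a rule instance (junk value out of range). -/
def Tag.prem : Tag → ℕ → Sequent
  | .impL Γ φ _ Δ s, 0 => ⟨Γ, s, φ ::ₘ Δ⟩
  | .impL Γ _ ψ Δ s, 1 => ⟨ψ ::ₘ Γ, s, Δ⟩
  | .impR Γ φ ψ Δ s, 0 => ⟨φ ::ₘ Γ, s, ψ ::ₘ Δ⟩
  | .box _ Γ P _ φ _, 0 => ⟨Γ + dne P, Ann.o, {φ}⟩
  | .mboxF _ Γ P _ φ, 0 => ⟨Γ + dne P, Ann.o, {φ}⟩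
  | .mboxF _ Γ P _ φ, 1 => ⟨Γ + dne P, Ann.fml φ, {Fml.mbox φ}⟩
  | .mboxU _ Γ P _ φ _, 0 => ⟨Γ + dne P, Ann.o, {φ}⟩
  | .mboxU _ Γ P _ φ _, 1 => ⟨Γ + dne P, Ann.fml φ, {Fml.mbox φ}⟩
  | .cut Γ Δ χ s, 0 => ⟨Γ, s, χ ::ₘ Δ⟩
  | .cut Γ Δ χ s, 1 => ⟨χ ::ₘ Γ, s, Δ⟩
  | _, _ => ⟨0, Ann.o, 0⟩

/-- Side conditions: `⊞_u` is applicable only when `s ≠ φ`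
(`⊞_f` has `s = φ` built into its conclusion). -/
def Tag.sideOk : Tag → Prop
  | .mboxU _ _ _ _ φ s => s ≠ Ann.fml φ
  | _ => True

/-- Which children are witnesses (proofs in a strictly lower-indexed system). -/
def Tag.witness : Tag → ℕ → Bool
  | .box .., 0 => true
  | .mboxF .., 0 => true
  | .mboxU .., 0 => true
  | .mboxU .., 1 => true
  | _, _ => false

/-- Progress occurs exactly at the right premise of `⊞_f`. -/
def Tag.progress : Tag → ℕ → Bool
  | .mboxF .., 1 => true
  | _, _ => false

/-- Whether a node is a cut. -/
def Tag.isCut : Tag → Prop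
  | .cut .. => True
  | _ => False

/-- The cut formula of a cut node. -/
def Tag.cutFml : Tag → Option Fml
  | .cut _ _ χ _ => some χ
  | _ => none

/-- A (possibly non-wellfounded) derivation tree: a partial labelling of addresses by
rule instances.  Witnesses (and witnesses of witnesses, and so on) are included as
subtrees hanging off witness edges. -/
structure PreProof : Type where
  label : List ℕ → Option Tag

namespace PreProof

def dom (π : PreProof) (a : List ℕ) : Prop := π.label a ≠ none

/-- Local well-formedness of a derivation tree. -/
structure Wf (π : PreProof) : Prop where
  root : π.dom []
  prefixClosed : ∀ a i, π.dom (a ++ [i]) → π.dom a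
  arity : ∀ a t, π.label a = some t → ∀ i : ℕ, (π.dom (a ++ [i]) ↔ i < t.arity)
  coherent : ∀ a t i ti, π.label a = some t → π.label (a ++ [i]) = some ti →
    ti.concl = t.prem i
  seqOk : ∀ a t, π.label a = some t → t.concl.ok
  side : ∀ a t, π.label a = some t → t.sideOk

/-- The address of the `n`-th node along the branch `f`. -/
def branchPrefix (f : ℕ → ℕ) (n : ℕ) : List ℕ := (List.range n).map f

/-- `f` is an infinite branch of `π`. -/
def IsBranch (π : PreProof) (f : ℕ → ℕ) : Prop := ∀ n, π.dom (branchPrefix f n)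

/-- Every infinite branch crosses progress edges or witness edges infinitely often
(together with the ordinal labelling below, this says every infinite branch of each of
the stratified systems makes progress infinitely often). -/
def ProgressCond (π : PreProof) : Prop :=
  ∀ f : ℕ → ℕ, π.IsBranch f → ∀ N : ℕ, ∃ n, N ≤ n ∧ ∃ t,
    π.label (branchPrefix f n) = some t ∧
    (t.progress (f n) = true ∨ t.witness (f n) = true)

/-- `π` carries an ordinal labelling witnessing that it is a proof of the system indexed
by `α`: witnesses live in systems of strictly smaller index. -/
def OrdOk (π : PreProof) (α : Ordinal.{0}) : Prop :=
  ∃ ord : List ℕ → Ordinal.{0}, ord [] = α ∧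
    ∀ a t (i : ℕ), π.label a = some t → π.dom (a ++ [i]) →
      (t.witness i = true → ord (a ++ [i]) < ord a) ∧
      (t.witness i = false → ord (a ++ [i]) = ord a)

/-- `π` is a proof in `α`-G∞ℓK⁺ + Cut. -/
def IsProofLe (π : PreProof) (α : Ordinal.{0}) : Prop :=
  π.Wf ∧ π.ProgressCond ∧ π.OrdOk α

/-- `π` is a proof in G∞ℓK⁺ + Cut. -/
def IsProof (π : PreProof) : Prop := π.Wf ∧ π.ProgressCond ∧ ∃ α, π.OrdOk α

/-- `‖π‖`: the least `α` such that `π` is a proof in the `α`-indexed system. -/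
noncomputable def height (π : PreProof) : Ordinal.{0} := sInf {α : Ordinal.{0} | π.OrdOk α}

/-- Cut-free (everywhere: in the main fragment, witnesses, witnesses of witnesses, …). -/
def CutFree (π : PreProof) : Prop := ∀ a t, π.label a = some t → ¬ t.isCut

/-- `π` proves the sequent `S`. -/
def Concl (π : PreProof) (S : Sequent) : Prop :=
  ∃ t, π.label [] = some t ∧ t.concl = S

/-- The subtree at address `a`. -/
def sub (π : PreProof) (a : List ℕ) : PreProof := ⟨fun b => π.label (a ++ b)⟩

/-- `a` belongs to the main global fragment: the path to `a` crosses no witness edges. -/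
def inMainGlobal (π : PreProof) (a : List ℕ) : Prop :=
  π.dom a ∧ ∀ b i, (b ++ [i]) <+: a → ∀ t, π.label b = some t → t.witness i = false

/-- `a` belongs to the main local fragment: the path to `a` crosses no witness edges
and no progress edges. -/
def inMainLocal (π : PreProof) (a : List ℕ) : Prop :=
  π.dom a ∧ ∀ b i, (b ++ [i]) <+: a → ∀ t, π.label b = some t →
    t.witness i = false ∧ t.progress i = false

/-- All cuts occur in the main global fragment (the shape of proofs with mCut:
witnesses are cut-free). -/
def MCutShape (π : PreProof) : Prop :=
  ∀ a t, π.label a = some t → t.isCut → π.inMainGlobal a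

/-- No cuts occur in the main global fragment (the shape of proofs with wCut). -/
def WCutShape (π : PreProof) : Prop :=
  ∀ a t, π.label a = some t → t.isCut → ¬ π.inMainGlobal a

/-- No cuts in the main local fragment. -/
def NoCutInMainLocal (π : PreProof) : Prop :=
  ∀ a t, π.label a = some t → t.isCut → ¬ π.inMainLocal a

/-- `π` has local cuts only: it is a proof in G∞ℓK⁺ + mCut all of whose cuts occur
in its main local fragment. -/
def LocalCutsOnly (π : PreProof) : Prop :=
  π.IsProof ∧ ∀ a t, π.label a = some t → t.isCut → π.inMainLocal a

/-- `τ` is a witness of `π`: a subtree hanging off a witness edge from the main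
global fragment. -/
def IsWitnessOf (τ π : PreProof) : Prop :=
  ∃ a t i, π.inMainGlobal a ∧ π.label a = some t ∧ t.witness i = true ∧
    τ = π.sub (a ++ [i])

/-- `|π|`: the local height, i.e. the height of the main local fragment. -/
noncomputable def localHeight (π : PreProof) : ℕ∞ :=
  ⨆ a ∈ {a : List ℕ | π.inMainLocal a}, (a.length : ℕ∞)

/-- All cuts of `π` (including those in witnesses, witnesses of witnesses, …) have
size smaller than `n`. -/
def CutSizesLt (π : PreProof) (n : ℕ) : Prop :=
  ∀ a t χ, π.label a = some t → t.cutFml = some χ → χ.size < n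

/-- `(⊞χ, α)`-unblocked: all cuts have cut formula `χ` or `⊞χ`, and cuts with cut
formula `⊞χ` have height at most `α` and cut-free subproofs at their premises. -/
def Unblocked (π : PreProof) (χ : Fml) (α : Ordinal.{0}) : Prop :=
  ∀ a t ψ, π.label a = some t → t.cutFml = some ψ →
    (ψ = χ ∨ ψ = Fml.mbox χ) ∧
    (ψ = Fml.mbox χ →
      Ordinal.nadd (π.sub (a ++ [0])).height (π.sub (a ++ [1])).height ≤ α ∧
      (π.sub (a ++ [0])).CutFree ∧ (π.sub (a ++ [1])).CutFree)

end PreProof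

/-- `G∞ℓK⁺_s ⊢ Γ ⇒_s Δ` (cut-free provability). -/
def Provable (Γ : Msf) (s : Ann) (Δ : Msf) : Prop :=
  ∃ π : PreProof, π.IsProof ∧ π.CutFree ∧ π.Concl ⟨Γ, s, Δ⟩

/-- `G∞ℓK⁺_s + Cut ⊢ Γ ⇒_s Δ`. -/
def ProvableC (Γ : Msf) (s : Ann) (Δ : Msf) : Prop :=
  ∃ π : PreProof, π.IsProof ∧ π.Concl ⟨Γ, s, Δ⟩

/-- Cut admissibility for the formula `χ`. -/
def CutAdm (χ : Fml) : Prop :=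
  ∀ (s : Ann) (Γ Δ : Msf), Provable Γ s (χ ::ₘ Δ) → Provable (χ ::ₘ Γ) s Δ →
    Provable Γ s Δ

/-- Cut admissibility for `χ` with cuts of height smaller than `α`. -/
def CutAdmBelow (χ : Fml) (α : Ordinal.{0}) : Prop :=
  ∀ (s : Ann) (Γ Δ : Msf) (π τ : PreProof),
    π.IsProof → π.CutFree → π.Concl ⟨Γ, s, χ ::ₘ Δ⟩ →
    τ.IsProof → τ.CutFree → τ.Concl ⟨χ ::ₘ Γ, s, Δ⟩ →
    Ordinal.nadd π.height τ.height < α →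
    Provable Γ s Δ

/-! Preservation properties of functions on proofs. -/

def PreservesOrdHeight (f : PreProof → PreProof) : Prop :=
  ∀ π : PreProof, π.IsProof → (f π).height ≤ π.height

def PreservesLocalHeight (f : PreProof → PreProof) : Prop :=
  ∀ π : PreProof, π.IsProof → (f π).localHeight ≤ π.localHeight

def PreservesCutSizes (f : PreProof → PreProof) : Prop :=
  ∀ (n : ℕ) (π : PreProof), π.IsProof → π.CutSizesLt n → (f π).CutSizesLt n

def PreservesMainLocalCutFree (f : PreProof → PreProof) : Prop :=
  ∀ π : PreProof, π.IsProof → π.NoCutInMainLocal → (f π).NoCutInMainLocal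

def PreservesCutLocality (f : PreProof → PreProof) : Prop :=
  ∀ π : PreProof, π.LocalCutsOnly → (f π).LocalCutsOnly

def PreservesWitnessCutLocality (f : PreProof → PreProof) : Prop :=
  ∀ π : PreProof, π.IsProof → (∀ τ : PreProof, τ.IsWitnessOf π → τ.LocalCutsOnly) →
    ∀ τ : PreProof, τ.IsWitnessOf (f π) → τ.LocalCutsOnly

def WeaklyPreserving (f : PreProof → PreProof) : Prop :=
  PreservesLocalHeight f ∧ PreservesCutSizes f ∧
    PreservesMainLocalCutFree f ∧ PreservesCutLocality f

def StronglyPreserving (f : PreProof → PreProof) : Prop :=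
  WeaklyPreserving f ∧ PreservesOrdHeight f ∧ PreservesWitnessCutLocality f

set_option maxHeartbeats 1000000

deriving instance DecidableEq for Fml

namespace InvAux
open PreProof

theorem concat_inj' {l m : List ℕ} {x y : ℕ} (h : l ++ [x] = m ++ [y]) : l = m ∧ x = y := by
  obtain ⟨h1, h2⟩ := List.append_inj' h rfl
  exact ⟨h1, by simpa using h2⟩

theorem prefix_snoc {l m : List ℕ} {x : ℕ} (h : l <+: m ++ [x]) : l <+: m ∨ l = m ++ [x] := by
  rcases h with ⟨r, hr⟩
  rcases r.eq_nil_or_concat with rfl | ⟨r', y, rfl⟩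
  · right; simpa using hr
  · left
    rw [List.concat_eq_append, ← List.append_assoc] at hr
    exact ⟨r', (concat_inj' hr).1⟩

theorem erase_cons_comm {x θ : Fml} {X : Msf} (h : x ≠ θ ∨ θ ∈ X) :
    (x ::ₘ X).erase θ = x ::ₘ X.erase θ := by
  rcases h with h | h
  · exact X.erase_cons_tail h
  · exact Multiset.erase_cons_tail_of_mem h

theorem add_cons' (A B : Msf) (x : Fml) : A + (x ::ₘ B) = x ::ₘ (A + B) := by
  rw [← Multiset.singleton_add, ← Multiset.singleton_add, add_left_comm]

def childKeep : Tag → Bool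
  | .impL .. => true
  | .impR .. => true
  | .cut .. => true
  | _ => false

theorem witness_childKeep {t : Tag} {i : ℕ} (h : t.witness i = true) :
    childKeep t = false := by
  cases t <;> rcases i with _|_|i <;> simp_all [Tag.witness, childKeep]

structure Spec where
  θ : Fml
  onLeft : Bool
  aL : Msf
  aR : Msf
  gIdx : Tag → Option ℕ

namespace Spec

variable (sp : Spec)

def opL (X : Msf) : Msf := sp.aL + (if sp.onLeft then X.erase sp.θ else X)
def opR (X : Msf) : Msf := sp.aR + (if sp.onLeft then X else X.erase sp.θ)
def Op (S : Sequent) : Sequent := ⟨sp.opL S.left, S.ann, sp.opR S.right⟩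
def slot (S : Sequent) : Msf := if sp.onLeft then S.left else S.right

theorem opL_cons {x : Fml} {X : Msf} (h : sp.onLeft = true → (x ≠ sp.θ ∨ sp.θ ∈ X)) :
    sp.opL (x ::ₘ X) = x ::ₘ sp.opL X := by
  cases hL : sp.onLeft with
  | false => simp [opL, hL, add_cons']
  | true => simp only [opL, hL, if_true]; rw [erase_cons_comm (h hL), add_cons']

theorem opR_cons {x : Fml} {X : Msf} (h : sp.onLeft = false → (x ≠ sp.θ ∨ sp.θ ∈ X)) :
    sp.opR (x ::ₘ X) = x ::ₘ sp.opR X := by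
  cases hL : sp.onLeft with
  | true => simp [opR, hL, add_cons']
  | false => simp only [opR, hL, Bool.false_eq_true, if_false]; rw [erase_cons_comm (h hL), add_cons']

theorem opL_add {X Y : Msf} (h : sp.onLeft = true → sp.θ ∈ X) :
    sp.opL (X + Y) = sp.opL X + Y := by
  cases hL : sp.onLeft with
  | false => simp [opL, hL, add_assoc]
  | true => simp only [opL, hL, if_true]; rw [Multiset.erase_add_left_pos Y (h hL), add_assoc]

theorem Op_ok (hmb : ∀ φ, sp.θ ≠ Fml.mbox φ) {S : Sequent} (h : S.ok) : (sp.Op S).ok := by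
  intro φ hφ
  have := h φ hφ
  cases hL : sp.onLeft with
  | true => simp [Op, opR, hL]; right; exact this
  | false =>
    simp [Op, opR, hL]
    right
    rw [Multiset.mem_erase_of_ne (fun e => hmb φ e.symm)]
    exact this

def adjust : Tag → Tag
  | .ax Γ p Δ s => .ax (sp.opL Γ) p (sp.opR Δ) s
  | .axBot Γ Δ s => .axBot (sp.opL Γ) (sp.opR Δ) s
  | .impL Γ φ ψ Δ s => .impL (sp.opL Γ) φ ψ (sp.opR Δ) s
  | .impR Γ φ ψ Δ s => .impR (sp.opL Γ) φ ψ (sp.opR Δ) s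
  | .box Sg Γ P Δ φ s => .box (sp.opL Sg) Γ P (sp.opR Δ) φ s
  | .mboxF Sg Γ P Δ φ => .mboxF (sp.opL Sg) Γ P (sp.opR Δ) φ
  | .mboxU Sg Γ P Δ φ s => .mboxU (sp.opL Sg) Γ P (sp.opR Δ) φ s
  | .cut Γ Δ χ s => .cut (sp.opL Γ) (sp.opR Δ) χ s

def nextAct (t : Tag) (i : ℕ) : Bool :=
  InvAux.childKeep t && decide (sp.θ ∈ sp.slot (t.prem i))

theorem adjust_arity (t : Tag) : (sp.adjust t).arity = t.arity := by
  cases t <;> rfl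

theorem adjust_witness (t : Tag) (i : ℕ) : (sp.adjust t).witness i = t.witness i := by
  cases t <;> rcases i with _|_|i <;> rfl

theorem adjust_progress (t : Tag) (i : ℕ) : (sp.adjust t).progress i = t.progress i := by
  cases t <;> rcases i with _|_|i <;> rfl

theorem adjust_isCut (t : Tag) : (sp.adjust t).isCut ↔ t.isCut := by
  cases t <;> simp [adjust, Tag.isCut]

theorem adjust_cutFml (t : Tag) : (sp.adjust t).cutFml = t.cutFml := by
  cases t <;> rfl

theorem adjust_sideOk (t : Tag) (h : t.sideOk) : (sp.adjust t).sideOk := by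
  cases t <;> simpa [adjust, Tag.sideOk] using h

end Spec
end InvAux
namespace InvAux
namespace Spec
variable (sp : Spec)

structure Good (sp : Spec) : Prop where
  hvar : ∀ p, sp.θ ≠ .var p
  hbox : ∀ φ, sp.θ ≠ .box φ
  hmbox : ∀ φ, sp.θ ≠ .mbox φ
  hbot : sp.onLeft = true → sp.θ ≠ .bot
  hgraft : ∀ t k, sp.gIdx t = some k →
    t.prem k = sp.Op t.concl ∧ k < t.arity ∧ t.witness k = false ∧ t.progress k = false
  himpL : sp.onLeft = true → ∀ Γ φ ψ Δ s, sp.gIdx (.impL Γ φ ψ Δ s) = none → Fml.imp φ ψ ≠ sp.θ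
  himpR : sp.onLeft = false → ∀ Γ φ ψ Δ s, sp.gIdx (.impR Γ φ ψ Δ s) = none → Fml.imp φ ψ ≠ sp.θ

variable {sp}

theorem slot_left (h : sp.onLeft = true) (S : Sequent) : sp.slot S = S.left := by
  simp [slot, h]
theorem slot_right (h : sp.onLeft = false) (S : Sequent) : sp.slot S = S.right := by
  simp [slot, h]

theorem mem_modal_left (G : sp.Good) {Sg Γ P : Msf}
    (h : sp.θ ∈ Sg + Γ.map Fml.box + P.map Fml.mbox) : sp.θ ∈ Sg := by
  rcases Multiset.mem_add.1 h with h | h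
  · rcases Multiset.mem_add.1 h with h | h
    · exact h
    · rcases Multiset.mem_map.1 h with ⟨x, _, hx⟩
      exact absurd hx.symm (G.hbox x)
  · rcases Multiset.mem_map.1 h with ⟨x, _, hx⟩
    exact absurd hx.symm (G.hmbox x)

theorem adjust_concl (G : sp.Good) {t : Tag} (hpres : sp.θ ∈ sp.slot t.concl)
    (hg : sp.gIdx t = none) : (sp.adjust t).concl = sp.Op t.concl := by
  cases t with
  | ax Γ p Δ s =>
    show (⟨Fml.var p ::ₘ sp.opL Γ, s, Fml.var p ::ₘ sp.opR Δ⟩ : Sequent)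
       = ⟨sp.opL (Fml.var p ::ₘ Γ), s, sp.opR (Fml.var p ::ₘ Δ)⟩
    rw [sp.opL_cons (fun _ => Or.inl (fun e => G.hvar p e.symm)),
        sp.opR_cons (fun _ => Or.inl (fun e => G.hvar p e.symm))]
  | axBot Γ Δ s =>
    show (⟨Fml.bot ::ₘ sp.opL Γ, s, sp.opR Δ⟩ : Sequent) = ⟨sp.opL (Fml.bot ::ₘ Γ), s, sp.opR Δ⟩
    rw [sp.opL_cons (fun hL => Or.inl (fun e => G.hbot hL e.symm))]
  | impL Γ φ ψ Δ s =>
    show (⟨Fml.imp φ ψ ::ₘ sp.opL Γ, s, sp.opR Δ⟩ : Sequent) = ⟨sp.opL (Fml.imp φ ψ ::ₘ Γ), s, sp.opR Δ⟩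
    rw [sp.opL_cons (fun hL => Or.inl (G.himpL hL Γ φ ψ Δ s hg))]
  | impR Γ φ ψ Δ s =>
    show (⟨sp.opL Γ, s, Fml.imp φ ψ ::ₘ sp.opR Δ⟩ : Sequent) = ⟨sp.opL Γ, s, sp.opR (Fml.imp φ ψ ::ₘ Δ)⟩
    rw [sp.opR_cons (fun hL => Or.inl (G.himpR hL Γ φ ψ Δ s hg))]
  | box Sg Γ P Δ φ s =>
    have hm : sp.onLeft = true → sp.θ ∈ Sg := by
      intro hL
      rw [slot_left hL] at hpres
      exact mem_modal_left G hpres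
    show (⟨sp.opL Sg + Γ.map Fml.box + P.map Fml.mbox, s, Fml.box φ ::ₘ sp.opR Δ⟩ : Sequent)
       = ⟨sp.opL (Sg + Γ.map Fml.box + P.map Fml.mbox), s, sp.opR (Fml.box φ ::ₘ Δ)⟩
    rw [sp.opL_add (fun hL => Multiset.mem_add.2 (Or.inl (hm hL))), sp.opL_add hm,
        sp.opR_cons (fun _ => Or.inl (fun e => G.hbox φ e.symm))]
  | mboxF Sg Γ P Δ φ =>
    have hm : sp.onLeft = true → sp.θ ∈ Sg := by
      intro hL
      rw [slot_left hL] at hpres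
      exact mem_modal_left G hpres
    show (⟨sp.opL Sg + Γ.map Fml.box + P.map Fml.mbox, Ann.fml φ, Fml.mbox φ ::ₘ sp.opR Δ⟩ : Sequent)
       = ⟨sp.opL (Sg + Γ.map Fml.box + P.map Fml.mbox), Ann.fml φ, sp.opR (Fml.mbox φ ::ₘ Δ)⟩
    rw [sp.opL_add (fun hL => Multiset.mem_add.2 (Or.inl (hm hL))), sp.opL_add hm,
        sp.opR_cons (fun _ => Or.inl (fun e => G.hmbox φ e.symm))]
  | mboxU Sg Γ P Δ φ s =>
    have hm : sp.onLeft = true → sp.θ ∈ Sg := by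
      intro hL
      rw [slot_left hL] at hpres
      exact mem_modal_left G hpres
    show (⟨sp.opL Sg + Γ.map Fml.box + P.map Fml.mbox, s, Fml.mbox φ ::ₘ sp.opR Δ⟩ : Sequent)
       = ⟨sp.opL (Sg + Γ.map Fml.box + P.map Fml.mbox), s, sp.opR (Fml.mbox φ ::ₘ Δ)⟩
    rw [sp.opL_add (fun hL => Multiset.mem_add.2 (Or.inl (hm hL))), sp.opL_add hm,
        sp.opR_cons (fun _ => Or.inl (fun e => G.hmbox φ e.symm))]
  | cut Γ Δ χ s => rfl

theorem presPrem (G : sp.Good) {t : Tag} (hpres : sp.θ ∈ sp.slot t.concl)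
    (hg : sp.gIdx t = none) (hk : childKeep t = true) {i : ℕ} (hi : i < t.arity) :
    sp.θ ∈ sp.slot (t.prem i) := by
  cases t with
  | impL Γ φ ψ Δ s =>
    cases hL : sp.onLeft with
    | true =>
      rw [slot_left hL] at hpres ⊢
      have : sp.θ ∈ Γ := by
        rcases Multiset.mem_cons.1 hpres with h | h
        · exact absurd h.symm (G.himpL hL Γ φ ψ Δ s hg)
        · exact h
      rcases i with _ | _ | i
      · exact this
      · exact Multiset.mem_cons_of_mem this
      · simp only [Tag.arity] at hi; omega
    | false =>
      rw [slot_right hL] at hpres ⊢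
      rcases i with _ | _ | i
      · exact Multiset.mem_cons_of_mem hpres
      · exact hpres
      · simp only [Tag.arity] at hi; omega
  | impR Γ φ ψ Δ s =>
    cases hL : sp.onLeft with
    | true =>
      rw [slot_left hL] at hpres ⊢
      rcases i with _ | i
      · exact Multiset.mem_cons_of_mem hpres
      · simp only [Tag.arity] at hi; omega
    | false =>
      rw [slot_right hL] at hpres ⊢
      have : sp.θ ∈ Δ := by
        rcases Multiset.mem_cons.1 hpres with h | h
        · exact absurd h.symm (G.himpR hL Γ φ ψ Δ s hg)
        · exact h
      rcases i with _ | i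
      · exact Multiset.mem_cons_of_mem this
      · simp only [Tag.arity] at hi; omega
  | cut Γ Δ χ s =>
    cases hL : sp.onLeft with
    | true =>
      rw [slot_left hL] at hpres ⊢
      rcases i with _ | _ | i
      · exact hpres
      · exact Multiset.mem_cons_of_mem hpres
      · simp only [Tag.arity] at hi; omega
    | false =>
      rw [slot_right hL] at hpres ⊢
      rcases i with _ | _ | i
      · exact Multiset.mem_cons_of_mem hpres
      · exact hpres
      · simp only [Tag.arity] at hi; omega
  | ax Γ p Δ s => simp [childKeep] at hk
  | axBot Γ Δ s => simp [childKeep] at hk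
  | box Sg Γ P Δ φ s => simp [childKeep] at hk
  | mboxF Sg Γ P Δ φ => simp [childKeep] at hk
  | mboxU Sg Γ P Δ φ s => simp [childKeep] at hk

theorem adjust_prem (G : sp.Good) {t : Tag} (hpres : sp.θ ∈ sp.slot t.concl)
    (hg : sp.gIdx t = none) (hk : childKeep t = true) {i : ℕ} (hi : i < t.arity) :
    (sp.adjust t).prem i = sp.Op (t.prem i) := by
  cases t with
  | impL Γ φ ψ Δ s =>
    have hmL : sp.onLeft = true → sp.θ ∈ Γ := by
      intro hL
      rw [slot_left hL] at hpres
      rcases Multiset.mem_cons.1 hpres with h | h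
      · exact absurd h.symm (G.himpL hL Γ φ ψ Δ s hg)
      · exact h
    have hmR : sp.onLeft = false → sp.θ ∈ Δ := by
      intro hL; rw [slot_right hL] at hpres; exact hpres
    rcases i with _ | _ | i
    · show (⟨sp.opL Γ, s, φ ::ₘ sp.opR Δ⟩ : Sequent) = ⟨sp.opL Γ, s, sp.opR (φ ::ₘ Δ)⟩
      rw [sp.opR_cons (fun hL => Or.inr (hmR hL))]
    · show (⟨ψ ::ₘ sp.opL Γ, s, sp.opR Δ⟩ : Sequent) = ⟨sp.opL (ψ ::ₘ Γ), s, sp.opR Δ⟩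
      rw [sp.opL_cons (fun hL => Or.inr (hmL hL))]
    · simp only [Tag.arity] at hi; omega
  | impR Γ φ ψ Δ s =>
    have hmL : sp.onLeft = true → sp.θ ∈ Γ := by
      intro hL; rw [slot_left hL] at hpres; exact hpres
    have hmR : sp.onLeft = false → sp.θ ∈ Δ := by
      intro hL
      rw [slot_right hL] at hpres
      rcases Multiset.mem_cons.1 hpres with h | h
      · exact absurd h.symm (G.himpR hL Γ φ ψ Δ s hg)
      · exact h
    rcases i with _ | i
    · show (⟨φ ::ₘ sp.opL Γ, s, ψ ::ₘ sp.opR Δ⟩ : Sequent) = ⟨sp.opL (φ ::ₘ Γ), s, sp.opR (ψ ::ₘ Δ)⟩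
      rw [sp.opL_cons (fun hL => Or.inr (hmL hL)), sp.opR_cons (fun hL => Or.inr (hmR hL))]
    · simp only [Tag.arity] at hi; omega
  | cut Γ Δ χ s =>
    have hmL : sp.onLeft = true → sp.θ ∈ Γ := by
      intro hL; rw [slot_left hL] at hpres; exact hpres
    have hmR : sp.onLeft = false → sp.θ ∈ Δ := by
      intro hL; rw [slot_right hL] at hpres; exact hpres
    rcases i with _ | _ | i
    · show (⟨sp.opL Γ, s, χ ::ₘ sp.opR Δ⟩ : Sequent) = ⟨sp.opL Γ, s, sp.opR (χ ::ₘ Δ)⟩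
      rw [sp.opR_cons (fun hL => Or.inr (hmR hL))]
    · show (⟨χ ::ₘ sp.opL Γ, s, sp.opR Δ⟩ : Sequent) = ⟨sp.opL (χ ::ₘ Γ), s, sp.opR Δ⟩
      rw [sp.opL_cons (fun hL => Or.inr (hmL hL))]
    · simp only [Tag.arity] at hi; omega
  | ax Γ p Δ s => simp [childKeep] at hk
  | axBot Γ Δ s => simp [childKeep] at hk
  | box Sg Γ P Δ φ s => simp [childKeep] at hk
  | mboxF Sg Γ P Δ φ => simp [childKeep] at hk
  | mboxU Sg Γ P Δ φ s => simp [childKeep] at hk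

theorem adjust_prem_frozen {t : Tag} (hk : childKeep t = false) (i : ℕ) :
    (sp.adjust t).prem i = t.prem i := by
  cases t <;> rcases i with _ | _ | i <;> first | rfl | (simp [childKeep] at hk)

end Spec
end InvAux
namespace InvAux
namespace Spec

variable (sp : Spec) (π : PreProof)

def sim : List ℕ → List ℕ → List ℕ × Bool
  | real, [] =>
      match π.label real with
      | none => (real, false)
      | some t =>
        match sp.gIdx t with
        | some k => (real ++ [k], false)
        | none => (real, true)
  | real, i :: a' =>
      match π.label real with
      | none => (real ++ i :: a', false)
      | some t =>
        match sp.gIdx t with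
        | some k => (real ++ [k] ++ i :: a', false)
        | none =>
          if sp.nextAct t i then sim (real ++ [i]) a' else (real ++ i :: a', false)

def go (a : List ℕ) : Option Tag :=
  if (sp.sim π [] a).2 then (π.label (sp.sim π [] a).1).map sp.adjust
  else π.label (sp.sim π [] a).1

def initAct : Bool :=
  match π.label [] with
  | some t => decide (sp.θ ∈ sp.slot t.concl)
  | none => false

def Fn : PreProof := if sp.initAct π then ⟨sp.go π⟩ else π

variable {sp π}

theorem sim_nil_none {real} (h : π.label real = none) : sp.sim π real [] = (real, false) := by
  simp [sim, h]

theorem sim_nil_skip {real t k} (h : π.label real = some t) (hg : sp.gIdx t = some k) :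
    sp.sim π real [] = (real ++ [k], false) := by simp [sim, h, hg]

theorem sim_nil_act {real t} (h : π.label real = some t) (hg : sp.gIdx t = none) :
    sp.sim π real [] = (real, true) := by simp [sim, h, hg]

theorem sim_cons_none {real i a} (h : π.label real = none) :
    sp.sim π real (i :: a) = (real ++ i :: a, false) := by simp [sim, h]

theorem sim_cons_skip {real t k i a} (h : π.label real = some t) (hg : sp.gIdx t = some k) :
    sp.sim π real (i :: a) = (real ++ [k] ++ i :: a, false) := by simp [sim, h, hg]

theorem sim_cons_next {real t i a} (h : π.label real = some t) (hg : sp.gIdx t = none)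
    (hn : sp.nextAct t i = true) : sp.sim π real (i :: a) = sp.sim π (real ++ [i]) a := by
  simp [sim, h, hg, hn]

theorem sim_cons_stop {real t i a} (h : π.label real = some t) (hg : sp.gIdx t = none)
    (hn : sp.nextAct t i = false) : sp.sim π real (i :: a) = (real ++ i :: a, false) := by
  simp [sim, h, hg, hn]

theorem sim_prefix : ∀ (a real : List ℕ), real <+: (sp.sim π real a).1 := by
  intro a
  induction a with
  | nil =>
    intro real
    cases h : π.label real with
    | none => rw [sim_nil_none h]
    | some t =>
      cases hg : sp.gIdx t with
      | none => rw [sim_nil_act h hg]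
      | some k => rw [sim_nil_skip h hg]; exact List.prefix_append _ _
  | cons i a ih =>
    intro real
    cases h : π.label real with
    | none => rw [sim_cons_none h]; exact List.prefix_append _ _
    | some t =>
      cases hg : sp.gIdx t with
      | none =>
        cases hn : sp.nextAct t i with
        | true =>
          rw [sim_cons_next h hg hn]
          exact List.IsPrefix.trans (List.prefix_append _ _) (ih (real ++ [i]))
        | false => rw [sim_cons_stop h hg hn]; exact List.prefix_append _ _
      | some k => rw [sim_cons_skip h hg]; exact ⟨[k] ++ i :: a, (List.append_assoc _ _ _).symm⟩

theorem sim_len : ∀ (a real : List ℕ), real.length + a.length ≤ (sp.sim π real a).1.length := by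
  intro a
  induction a with
  | nil =>
    intro real
    cases h : π.label real with
    | none => rw [sim_nil_none h]; simp
    | some t =>
      cases hg : sp.gIdx t with
      | none => rw [sim_nil_act h hg]; simp
      | some k => rw [sim_nil_skip h hg]; simp
  | cons i a ih =>
    intro real
    cases h : π.label real with
    | none => rw [sim_cons_none h]; simp
    | some t =>
      cases hg : sp.gIdx t with
      | none =>
        cases hn : sp.nextAct t i with
        | true =>
          rw [sim_cons_next h hg hn]
          have := ih (real ++ [i])
          simp at this ⊢
          omega
        | false => rw [sim_cons_stop h hg hn]; simp
      | some k => rw [sim_cons_skip h hg]; simp; try omega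

theorem sim_act0 : ∀ (a real b : List ℕ), sp.sim π real a = (b, true) →
    ∃ t, π.label b = some t ∧ sp.gIdx t = none := by
  intro a
  induction a with
  | nil =>
    intro real b hs
    cases h : π.label real with
    | none => rw [sim_nil_none h] at hs; simp at hs
    | some t =>
      cases hg : sp.gIdx t with
      | none =>
        rw [sim_nil_act h hg] at hs
        simp only [Prod.mk.injEq] at hs
        obtain ⟨rfl, -⟩ := hs
        exact ⟨t, h, hg⟩
      | some k => rw [sim_nil_skip h hg] at hs; simp at hs
  | cons i a ih =>
    intro real b hs
    cases h : π.label real with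
    | none => rw [sim_cons_none h] at hs; simp at hs
    | some t =>
      cases hg : sp.gIdx t with
      | none =>
        cases hn : sp.nextAct t i with
        | true => rw [sim_cons_next h hg hn] at hs; exact ih _ _ hs
        | false => rw [sim_cons_stop h hg hn] at hs; simp at hs
      | some k => rw [sim_cons_skip h hg] at hs; simp at hs

theorem sim_act_pres (Hwf : π.Wf) : ∀ (a real : List ℕ),
    (∀ t0, π.label real = some t0 → sp.θ ∈ sp.slot t0.concl) →
    ∀ b, sp.sim π real a = (b, true) →
    ∃ t, π.label b = some t ∧ sp.gIdx t = none ∧ sp.θ ∈ sp.slot t.concl := by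
  intro a
  induction a with
  | nil =>
    intro real hp b hs
    cases h : π.label real with
    | none => rw [sim_nil_none h] at hs; simp at hs
    | some t =>
      cases hg : sp.gIdx t with
      | none =>
        rw [sim_nil_act h hg] at hs
        simp only [Prod.mk.injEq] at hs
        obtain ⟨rfl, -⟩ := hs
        exact ⟨t, h, hg, hp t h⟩
      | some k => rw [sim_nil_skip h hg] at hs; simp at hs
  | cons i a ih =>
    intro real hp b hs
    cases h : π.label real with
    | none => rw [sim_cons_none h] at hs; simp at hs
    | some t =>
      cases hg : sp.gIdx t with
      | none =>
        cases hn : sp.nextAct t i with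
        | true =>
          rw [sim_cons_next h hg hn] at hs
          refine ih _ ?_ _ hs
          intro t1 h1
          have hco := Hwf.coherent real t i t1 h h1
          have hmem : sp.θ ∈ sp.slot (t.prem i) := by
            simp [nextAct] at hn
            exact hn.2
          rw [hco]
          exact hmem
        | false => rw [sim_cons_stop h hg hn] at hs; simp at hs
      | some k => rw [sim_cons_skip h hg] at hs; simp at hs

theorem sim_append : ∀ (a d real : List ℕ),
    sp.sim π real (a ++ d) =
      if (sp.sim π real a).2 then sp.sim π (sp.sim π real a).1 d
      else ((sp.sim π real a).1 ++ d, false) := by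
  intro a
  induction a with
  | nil =>
    intro d real
    cases h : π.label real with
    | none =>
      rw [sim_nil_none h]
      simp only [List.nil_append, if_neg Bool.false_ne_true]
      cases d with
      | nil => rw [sim_nil_none h]; simp
      | cons j d' => rw [sim_cons_none h]
    | some t =>
      cases hg : sp.gIdx t with
      | none => rw [sim_nil_act h hg]; simp
      | some k =>
        rw [sim_nil_skip h hg]
        simp only [List.nil_append, if_neg Bool.false_ne_true]
        cases d with
        | nil => rw [sim_nil_skip h hg]; simp
        | cons j d' => rw [sim_cons_skip h hg]
  | cons i a ih =>
    intro d real
    cases h : π.label real with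
    | none =>
      rw [show (i :: a) ++ d = i :: (a ++ d) from rfl, sim_cons_none h, sim_cons_none h]
      simp
    | some t =>
      cases hg : sp.gIdx t with
      | none =>
        cases hn : sp.nextAct t i with
        | true =>
          rw [show (i :: a) ++ d = i :: (a ++ d) from rfl, sim_cons_next h hg hn,
             sim_cons_next h hg hn]
          exact ih d (real ++ [i])
        | false =>
          rw [show (i :: a) ++ d = i :: (a ++ d) from rfl, sim_cons_stop h hg hn,
             sim_cons_stop h hg hn]
          simp
      | some k =>
        rw [show (i :: a) ++ d = i :: (a ++ d) from rfl, sim_cons_skip h hg, sim_cons_skip h hg]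
        simp

theorem dom_extend (Hwf : π.Wf) : ∀ (l c : List ℕ), π.dom (c ++ l) → π.dom c := by
  intro l
  induction l using List.reverseRecOn with
  | nil => intro c h; simpa using h
  | append_singleton l i ih =>
    intro c h
    rw [← List.append_assoc] at h
    exact ih c (Hwf.prefixClosed (c ++ l) i h)

end Spec
end InvAux
namespace InvAux
namespace Spec

variable {sp : Spec} {π : PreProof}

theorem initAct_spec (hI : sp.initAct π = true) :
    ∀ t0, π.label [] = some t0 → sp.θ ∈ sp.slot t0.concl := by
  intro t0 h
  unfold initAct at hI
  rw [h] at hI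
  exact of_decide_eq_true hI

theorem go_eq' {a b' : List ℕ} {act : Bool} (hsim : sp.sim π [] a = (b', act)) :
    sp.go π a = if act then (π.label b').map sp.adjust else π.label b' := by
  unfold go
  rw [hsim]

theorem sim_snoc_eq {a b : List ℕ} {act : Bool} (hsim : sp.sim π [] a = (b, act)) (i : ℕ) :
    sp.sim π [] (a ++ [i]) = if act then sp.sim π b [i] else (b ++ [i], false) := by
  rw [sim_append, hsim]

theorem go_none (a : List ℕ) : sp.go π a = none ↔ π.label (sp.sim π [] a).1 = none := by
  unfold go
  split
  · simp [Option.map_eq_none_iff]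
  · rfl

theorem dom_go (a : List ℕ) : (⟨sp.go π⟩ : PreProof).dom a ↔ π.dom (sp.sim π [] a).1 := by
  show ¬ _ = _ ↔ ¬ _ = _
  rw [not_iff_not]
  exact go_none a

theorem sim_eta (a : List ℕ) : sp.sim π [] a = ((sp.sim π [] a).1, (sp.sim π [] a).2) := rfl

theorem sim_pair {a : List ℕ} {v : Bool} (h2 : (sp.sim π [] a).2 = v) :
    sp.sim π [] a = ((sp.sim π [] a).1, v) := by rw [← h2]

theorem go_tag {a : List ℕ} {t' : Tag} (h : sp.go π a = some t') :
    ∃ t, π.label (sp.sim π [] a).1 = some t ∧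
      (((sp.sim π [] a).2 = true ∧ t' = sp.adjust t ∧ sp.gIdx t = none) ∨
       ((sp.sim π [] a).2 = false ∧ t' = t)) := by
  unfold go at h
  by_cases h2 : (sp.sim π [] a).2 = true
  · rw [if_pos h2] at h
    cases hl : π.label (sp.sim π [] a).1 with
    | none => rw [hl] at h; exact absurd h (by simp)
    | some t =>
      rw [hl] at h
      have ht' : t' = sp.adjust t := (Option.some.inj h).symm
      obtain ⟨t1, hl1, hg1⟩ := sim_act0 (sp := sp) (π := π) a [] _ (by rw [sim_eta a, h2])
      have et : t1 = t := Option.some.inj (hl1.symm.trans hl)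
      rw [et] at hg1
      exact ⟨t, rfl, Or.inl ⟨h2, ht', hg1⟩⟩
  · rw [if_neg h2] at h
    exact ⟨t', h, Or.inr ⟨Bool.not_eq_true _ ▸ h2, rfl⟩⟩

theorem go_tag_act (Hwf : π.Wf) (hI : sp.initAct π = true) {a : List ℕ}
    (h2 : (sp.sim π [] a).2 = true) :
    ∃ t, π.label (sp.sim π [] a).1 = some t ∧ sp.gIdx t = none ∧
      sp.θ ∈ sp.slot t.concl ∧ sp.go π a = some (sp.adjust t) := by
  obtain ⟨t, hl, hg, hpres⟩ :=
    sim_act_pres Hwf a [] (initAct_spec hI) _ (by rw [sim_eta a, h2])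
  refine ⟨t, hl, hg, hpres, ?_⟩
  unfold go
  rw [if_pos h2, hl]
  rfl

theorem B_mono (a d : List ℕ) : (sp.sim π [] a).1 <+: (sp.sim π [] (a ++ d)).1 := by
  rw [sim_append]
  split
  · exact sim_prefix d _
  · exact List.prefix_append _ _

theorem snoc_master (a : List ℕ) (i : ℕ) :
    (∃ act, sp.sim π [] (a ++ [i]) = ((sp.sim π [] a).1 ++ [i], act)) ∨
    (∃ t2 k, π.label ((sp.sim π [] a).1 ++ [i]) = some t2 ∧ sp.gIdx t2 = some k ∧
      sp.sim π [] (a ++ [i]) = ((sp.sim π [] a).1 ++ [i] ++ [k], false)) := by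
  rw [sim_append]
  by_cases h2 : (sp.sim π [] a).2 = true
  · rw [if_pos h2]
    obtain ⟨t, hl, hg⟩ := sim_act0 (sp := sp) (π := π) a [] _ (by rw [sim_eta a, h2])
    cases hn : sp.nextAct t i with
    | false => rw [sim_cons_stop hl hg hn]; exact Or.inl ⟨false, rfl⟩
    | true =>
      rw [sim_cons_next hl hg hn]
      cases hl2 : π.label ((sp.sim π [] a).1 ++ [i]) with
      | none => rw [sim_nil_none hl2]; exact Or.inl ⟨false, rfl⟩
      | some t2 =>
        cases hg2 : sp.gIdx t2 with
        | none => rw [sim_nil_act hl2 hg2]; exact Or.inl ⟨true, rfl⟩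
        | some k => rw [sim_nil_skip hl2 hg2]; exact Or.inr ⟨t2, k, rfl, hg2, rfl⟩
  · rw [if_neg h2]
    exact Or.inl ⟨false, rfl⟩

theorem Fn_label (hI : sp.initAct π = true) : (sp.Fn π).label = sp.go π := by
  rw [Fn, if_pos hI]

theorem Fn_wf (G : sp.Good) (Hwf : π.Wf) : (sp.Fn π).Wf := by
  by_cases hI : sp.initAct π = true
  swap
  · rw [Fn, if_neg hI]; exact Hwf
  rw [Fn, if_pos hI]
  obtain ⟨t0, hl0, hpres0⟩ : ∃ t0, π.label [] = some t0 ∧ sp.θ ∈ sp.slot t0.concl := by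
    cases h : π.label [] with
    | none => unfold initAct at hI; rw [h] at hI; simp at hI
    | some t0 => exact ⟨t0, rfl, initAct_spec hI t0 h⟩
  constructor
  · -- root
    rw [dom_go]
    cases hg : sp.gIdx t0 with
    | none => rw [show sp.sim π [] [] = ([], true) from sim_nil_act hl0 hg]; exact Hwf.root
    | some k =>
      rw [show sp.sim π [] [] = ([] ++ [k], false) from sim_nil_skip hl0 hg]
      have hk := (G.hgraft t0 k hg).2.1
      exact (Hwf.arity [] t0 hl0 k).2 hk
  · -- prefixClosed
    intro a i h
    rw [dom_go] at h ⊢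
    rcases snoc_master a i with ⟨act, heq⟩ | ⟨t2, k, hl2, hg2, heq⟩
    · rw [heq] at h
      exact Hwf.prefixClosed _ i h
    · rw [heq] at h
      exact Hwf.prefixClosed _ i (Hwf.prefixClosed _ k h)
  · -- arity
    intro a t' h i
    obtain ⟨t, hl, hcase⟩ := go_tag h
    have harity : t'.arity = t.arity := by
      rcases hcase with ⟨-, rfl, -⟩ | ⟨-, rfl⟩
      · exact sp.adjust_arity t
      · rfl
    rw [show (⟨sp.go π⟩ : PreProof).dom (a ++ [i]) ↔ π.dom (sp.sim π [] (a ++ [i])).1 from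
        dom_go _, harity]
    rcases snoc_master a i with ⟨act, heq⟩ | ⟨t2, k, hl2, hg2, heq⟩
    · rw [heq]
      exact Hwf.arity _ t hl i
    · rw [heq]
      constructor
      · intro hd
        exact (Hwf.arity _ t hl i).1 (Hwf.prefixClosed _ k hd)
      · intro hi
        exact (Hwf.arity _ t2 hl2 k).2 (G.hgraft t2 k hg2).2.1
  · -- coherent
    intro a t' i ti h hi
    replace h : sp.go π a = some t' := h
    replace hi : sp.go π (a ++ [i]) = some ti := hi
    by_cases h2 : (sp.sim π [] a).2 = true
    · -- active
      obtain ⟨t, hl, hg, hpres, hgo⟩ := go_tag_act Hwf hI h2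
      obtain rfl : t' = sp.adjust t := Option.some.inj (h.symm.trans hgo)
      have hBsnoc : sp.sim π [] (a ++ [i]) = sp.sim π (sp.sim π [] a).1 [i] :=
        (sim_snoc_eq (sim_pair h2) i).trans (if_pos rfl)
      cases hn : sp.nextAct t i with
      | false =>
        have hsim2 : sp.sim π [] (a ++ [i]) = ((sp.sim π [] a).1 ++ [i], false) :=
          hBsnoc.trans (sim_cons_stop hl hg hn)
        have hti : π.label ((sp.sim π [] a).1 ++ [i]) = some ti := by
          rw [go_eq' hsim2, if_neg Bool.false_ne_true] at hi
          exact hi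
        have hdom : π.dom ((sp.sim π [] a).1 ++ [i]) := by rw [PreProof.dom, hti]; simp
        have hiar : i < t.arity := (Hwf.arity _ t hl i).1 hdom
        have hck : childKeep t = false := by
          cases hck : childKeep t with
          | false => rfl
          | true =>
            exfalso
            have hna : sp.nextAct t i = true := by
              unfold nextAct
              rw [hck]
              simpa using presPrem G hpres hg hck hiar
            rw [hn] at hna; exact Bool.false_ne_true hna
        rw [sp.adjust_prem_frozen hck i]
        exact Hwf.coherent _ t i ti hl hti
      | true =>
        have hck : childKeep t = true := ((Bool.and_eq_true _ _).mp hn).1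
        have hpp : sp.θ ∈ sp.slot (t.prem i) :=
          of_decide_eq_true ((Bool.and_eq_true _ _).mp hn).2
        have hBs2 : sp.sim π [] (a ++ [i]) = sp.sim π ((sp.sim π [] a).1 ++ [i]) [] :=
          hBsnoc.trans (sim_cons_next hl hg hn)
        cases hl2 : π.label ((sp.sim π [] a).1 ++ [i]) with
        | none =>
          exfalso
          have hsim2 := hBs2.trans (sim_nil_none hl2)
          rw [go_eq' hsim2, if_neg Bool.false_ne_true, hl2] at hi
          exact absurd hi (by simp)
        | some t1 =>
          have hiar : i < t.arity := by
            refine (Hwf.arity _ t hl i).1 ?_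
            rw [PreProof.dom, hl2]; simp
          have hco1 : t1.concl = t.prem i := Hwf.coherent _ t i t1 hl hl2
          cases hg2 : sp.gIdx t1 with
          | none =>
            have hsim2 := hBs2.trans (sim_nil_act hl2 hg2)
            rw [go_eq' hsim2, if_pos rfl, hl2] at hi
            obtain rfl : sp.adjust t1 = ti := Option.some.inj hi
            rw [sp.adjust_concl G (by rw [hco1]; exact hpp) hg2, hco1,
               sp.adjust_prem G hpres hg hck hiar]
          | some k =>
            have hsim2 := hBs2.trans (sim_nil_skip hl2 hg2)
            rw [go_eq' hsim2, if_neg Bool.false_ne_true] at hi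
            have hti : π.label ((sp.sim π [] a).1 ++ [i] ++ [k]) = some ti := hi
            have hco2 : ti.concl = t1.prem k := Hwf.coherent _ t1 k ti hl2 hti
            rw [hco2, (G.hgraft t1 k hg2).1, hco1, sp.adjust_prem G hpres hg hck hiar]
    · -- inactive
      have h2' : (sp.sim π [] a).2 = false := by
        cases hv : (sp.sim π [] a).2
        · rfl
        · exact absurd hv h2
      have hl : π.label (sp.sim π [] a).1 = some t' := by
        rw [go_eq' (sim_pair h2'), if_neg Bool.false_ne_true] at h
        exact h
      have hsim2 : sp.sim π [] (a ++ [i]) = ((sp.sim π [] a).1 ++ [i], false) :=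
        (sim_snoc_eq (sim_pair h2') i).trans (if_neg Bool.false_ne_true)
      rw [go_eq' hsim2, if_neg Bool.false_ne_true] at hi
      exact Hwf.coherent _ t' i ti hl hi
  · -- seqOk
    intro a t' h
    replace h : sp.go π a = some t' := h
    by_cases h2 : (sp.sim π [] a).2 = true
    · obtain ⟨t, hl, hg, hpres, hgo⟩ := go_tag_act Hwf hI h2
      obtain rfl : t' = sp.adjust t := Option.some.inj (h.symm.trans hgo)
      rw [sp.adjust_concl G hpres hg]
      exact sp.Op_ok G.hmbox (Hwf.seqOk _ t hl)
    · have h2' : (sp.sim π [] a).2 = false := by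
        cases hv : (sp.sim π [] a).2
        · rfl
        · exact absurd hv h2
      have hl : π.label (sp.sim π [] a).1 = some t' := by
        rw [go_eq' (sim_pair h2'), if_neg Bool.false_ne_true] at h
        exact h
      exact Hwf.seqOk _ t' hl
  · -- side
    intro a t' h
    replace h : sp.go π a = some t' := h
    by_cases h2 : (sp.sim π [] a).2 = true
    · obtain ⟨t, hl, hg, hpres, hgo⟩ := go_tag_act Hwf hI h2
      obtain rfl : t' = sp.adjust t := Option.some.inj (h.symm.trans hgo)
      exact sp.adjust_sideOk t (Hwf.side _ t hl)
    · have h2' : (sp.sim π [] a).2 = false := by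
        cases hv : (sp.sim π [] a).2
        · rfl
        · exact absurd hv h2
      have hl : π.label (sp.sim π [] a).1 = some t' := by
        rw [go_eq' (sim_pair h2'), if_neg Bool.false_ne_true] at h
        exact h
      exact Hwf.side _ t' hl

end Spec
end InvAux
namespace InvAux
namespace Spec

variable {sp : Spec} {π : PreProof}

theorem Fn_ordOk (G : sp.Good) (Hwf : π.Wf) {α : Ordinal.{0}} (h : π.OrdOk α) :
    (sp.Fn π).OrdOk α := by
  by_cases hI : sp.initAct π = true
  swap
  · rw [Fn, if_neg hI]; exact h
  rw [Fn, if_pos hI]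
  obtain ⟨ord, h0, hstep⟩ := h
  obtain ⟨t0, hl0⟩ : ∃ t0, π.label [] = some t0 := by
    cases hl : π.label [] with
    | none => unfold initAct at hI; rw [hl] at hI; simp at hI
    | some t0 => exact ⟨t0, rfl⟩
  refine ⟨fun a => ord (sp.sim π [] a).1, ?_, ?_⟩
  · show ord (sp.sim π [] []).1 = α
    cases hg : sp.gIdx t0 with
    | none => rw [sim_nil_act hl0 hg]; exact h0
    | some k =>
      rw [sim_nil_skip hl0 hg]
      have hdom : π.dom ([] ++ [k]) := (Hwf.arity [] t0 hl0 k).2 (G.hgraft t0 k hg).2.1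
      have := (hstep [] t0 k hl0 hdom).2 (G.hgraft t0 k hg).2.2.1
      rw [this]
      exact h0
  · intro a t' i hlab hdom
    show (t'.witness i = true → ord (sp.sim π [] (a ++ [i])).1 < ord (sp.sim π [] a).1) ∧
      (t'.witness i = false → ord (sp.sim π [] (a ++ [i])).1 = ord (sp.sim π [] a).1)
    replace hlab : sp.go π a = some t' := hlab
    replace hdom : π.dom (sp.sim π [] (a ++ [i])).1 := (dom_go _).1 hdom
    obtain ⟨t, hl, hcase⟩ := go_tag hlab
    have hwit : ∀ j, t'.witness j = t.witness j := by
      rcases hcase with ⟨-, rfl, -⟩ | ⟨-, rfl⟩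
      · exact fun j => sp.adjust_witness t j
      · exact fun j => rfl
    rcases snoc_master (sp := sp) (π := π) a i with ⟨act, heq⟩ | ⟨t2, k, hl2, hg2, heq⟩
    · rw [heq] at hdom ⊢
      have hs := hstep _ t i hl hdom
      constructor
      · intro hw; exact hs.1 (by rw [← hwit i]; exact hw)
      · intro hw; exact hs.2 (by rw [← hwit i]; exact hw)
    · rw [heq] at hdom ⊢
      have e1 : ord ((sp.sim π [] a).1 ++ [i] ++ [k]) = ord ((sp.sim π [] a).1 ++ [i]) :=
        (hstep _ t2 k hl2 hdom).2 (G.hgraft t2 k hg2).2.2.1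
      have hdom' : π.dom ((sp.sim π [] a).1 ++ [i]) := Hwf.prefixClosed _ k hdom
      have hs := hstep _ t i hl hdom'
      constructor
      · intro hw
        show ord ((sp.sim π [] a).1 ++ [i] ++ [k]) < _
        rw [e1]; exact hs.1 (by rw [← hwit i]; exact hw)
      · intro hw
        show ord ((sp.sim π [] a).1 ++ [i] ++ [k]) = _
        rw [e1]; exact hs.2 (by rw [← hwit i]; exact hw)

theorem sub_witness (Hwf : π.Wf) {a : List ℕ} {i : ℕ} {t' : Tag}
    (hgo : sp.go π a = some t') (hw : t'.witness i = true) :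
    ∀ c, sp.go π (a ++ i :: c) = π.label ((sp.sim π [] a).1 ++ i :: c) := by
  intro c
  by_cases h2 : (sp.sim π [] a).2 = true
  · obtain ⟨t, hl, hcase⟩ := go_tag hgo
    have hwt : t.witness i = true := by
      rcases hcase with ⟨-, rfl, -⟩ | ⟨h2', rfl⟩
      · rw [← sp.adjust_witness t i]; exact hw
      · rw [h2'] at h2; exact absurd h2 Bool.false_ne_true
    obtain ⟨-, -, hg⟩ : (sp.sim π [] a).2 = true ∧ t' = sp.adjust t ∧ sp.gIdx t = none := by
      rcases hcase with hc | ⟨h2', -⟩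
      · exact hc
      · rw [h2'] at h2; exact absurd h2 Bool.false_ne_true
    have hn : sp.nextAct t i = false := by
      unfold nextAct
      rw [witness_childKeep hwt]
      rfl
    have hsim2 : sp.sim π [] (a ++ i :: c) = ((sp.sim π [] a).1 ++ i :: c, false) := by
      rw [sim_append, if_pos h2, sim_cons_stop hl hg hn]
    rw [go_eq' hsim2, if_neg Bool.false_ne_true]
  · have h2' : (sp.sim π [] a).2 = false := by
      cases hv : (sp.sim π [] a).2
      · rfl
      · exact absurd hv h2
    have hsim2 : sp.sim π [] (a ++ i :: c) = ((sp.sim π [] a).1 ++ i :: c, false) := by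
      rw [sim_append, if_neg (by rw [h2']; exact Bool.false_ne_true)]
    rw [go_eq' hsim2, if_neg Bool.false_ne_true]

/-- Transfer of witness/progress-freeness of path edges, output to input. -/
theorem edge_fwd (G : sp.Good) (Hwf : π.Wf) (hI : sp.initAct π = true)
    (W P : Bool) (hWP : W = true ∨ P = true) :
    ∀ a : List ℕ, (⟨sp.go π⟩ : PreProof).dom a →
    (∀ b i, (b ++ [i]) <+: a → ∀ t', sp.go π b = some t' →
      (W = true → t'.witness i = false) ∧ (P = true → t'.progress i = false)) →
    ∀ c j, (c ++ [j]) <+: (sp.sim π [] a).1 → ∀ t, π.label c = some t →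
      (W = true → t.witness j = false) ∧ (P = true → t.progress j = false) := by
  intro a
  induction a using List.reverseRecOn with
  | nil =>
    intro hdom hedge c j hpre t hlc
    obtain ⟨t0, hl0⟩ : ∃ t0, π.label [] = some t0 := by
      cases hl : π.label [] with
      | none => unfold initAct at hI; rw [hl] at hI; simp at hI
      | some t0 => exact ⟨t0, rfl⟩
    cases hg : sp.gIdx t0 with
    | none =>
      rw [sim_nil_act hl0 hg] at hpre
      exfalso
      have := hpre.length_le
      simp at this
    | some k =>
      rw [sim_nil_skip hl0 hg] at hpre
      rcases prefix_snoc hpre with hp | hp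
      · exfalso
        have := hp.length_le
        simp at this
      · obtain ⟨rfl, rfl⟩ := concat_inj' hp
        rw [hl0] at hlc
        obtain rfl := Option.some.inj hlc
        exact ⟨fun _ => (G.hgraft _ _ hg).2.2.1, fun _ => (G.hgraft _ _ hg).2.2.2⟩
  | append_singleton a i ih =>
    intro hdom hedge c j hpre t hlc
    have hdoma : (⟨sp.go π⟩ : PreProof).dom a := by
      rw [dom_go] at hdom ⊢
      rcases snoc_master (sp := sp) (π := π) a i with ⟨act, heq⟩ | ⟨t2, k, hl2, hg2, heq⟩
      · rw [heq] at hdom; exact Hwf.prefixClosed _ i hdom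
      · rw [heq] at hdom; exact Hwf.prefixClosed _ i (Hwf.prefixClosed _ k hdom)
    have hedgea : ∀ b i', (b ++ [i']) <+: a → ∀ t', sp.go π b = some t' →
        (W = true → t'.witness i' = false) ∧ (P = true → t'.progress i' = false) :=
      fun b i' hp => hedge b i' (hp.trans (List.prefix_append _ _))
    have ihe := ih hdoma hedgea
    obtain ⟨ta, hgoa⟩ : ∃ ta, sp.go π a = some ta := by
      cases hv : sp.go π a with
      | none => exact absurd hv hdoma
      | some ta => exact ⟨ta, rfl⟩
    obtain ⟨tin, hlin, hcase⟩ := go_tag hgoa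
    have hwit : ∀ j', ta.witness j' = tin.witness j' ∧ ta.progress j' = tin.progress j' := by
      rcases hcase with ⟨-, rfl, -⟩ | ⟨-, rfl⟩
      · exact fun j' => ⟨sp.adjust_witness tin j', sp.adjust_progress tin j'⟩
      · exact fun j' => ⟨rfl, rfl⟩
    rcases snoc_master (sp := sp) (π := π) a i with ⟨act, heq⟩ | ⟨t2, k, hl2, hg2, heq⟩
    · rw [heq] at hpre
      rcases prefix_snoc hpre with hp | hp
      · exact ihe c j hp t hlc
      · obtain ⟨rfl, rfl⟩ := concat_inj' hp
        rw [hlin] at hlc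
        obtain rfl := Option.some.inj hlc
        have := hedge a j List.prefix_rfl ta hgoa
        exact ⟨fun hWt => (hwit j).1 ▸ this.1 hWt, fun hPt => (hwit j).2 ▸ this.2 hPt⟩
    · rw [heq] at hpre
      rcases prefix_snoc hpre with hp | hp
      · rcases prefix_snoc hp with hp2 | hp2
        · exact ihe c j hp2 t hlc
        · obtain ⟨rfl, rfl⟩ := concat_inj' hp2
          rw [hlin] at hlc
          obtain rfl := Option.some.inj hlc
          have := hedge a j List.prefix_rfl ta hgoa
          exact ⟨fun hWt => (hwit j).1 ▸ this.1 hWt, fun hPt => (hwit j).2 ▸ this.2 hPt⟩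
      · obtain ⟨rfl, rfl⟩ := concat_inj' hp
        rw [hl2] at hlc
        obtain rfl := Option.some.inj hlc
        exact ⟨fun _ => (G.hgraft _ _ hg2).2.2.1, fun _ => (G.hgraft _ _ hg2).2.2.2⟩

theorem inMainLocal_fwd (G : sp.Good) (Hwf : π.Wf) (hI : sp.initAct π = true) {a : List ℕ}
    (h : (⟨sp.go π⟩ : PreProof).inMainLocal a) : π.inMainLocal (sp.sim π [] a).1 := by
  refine ⟨(dom_go a).1 h.1, ?_⟩
  intro c j hpre t hlc
  have := edge_fwd G Hwf hI true true (Or.inl rfl) a h.1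
    (fun b i hp t' hgo => by
      have := h.2 b i hp t' hgo
      exact ⟨fun _ => this.1, fun _ => this.2⟩) c j hpre t hlc
  exact ⟨this.1 rfl, this.2 rfl⟩

theorem inMainGlobal_fwd (G : sp.Good) (Hwf : π.Wf) (hI : sp.initAct π = true) {a : List ℕ}
    (h : (⟨sp.go π⟩ : PreProof).inMainGlobal a) : π.inMainGlobal (sp.sim π [] a).1 := by
  refine ⟨(dom_go a).1 h.1, ?_⟩
  intro c j hpre t hlc
  have := edge_fwd G Hwf hI true false (Or.inl rfl) a h.1
    (fun b i hp t' hgo => by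
      have := h.2 b i hp t' hgo
      exact ⟨fun _ => this, fun hh => absurd hh Bool.false_ne_true⟩) c j hpre t hlc
  exact this.1 rfl

theorem inMainLocal_bwd (Hwf : π.Wf) {a : List ℕ}
    (hdom : (⟨sp.go π⟩ : PreProof).dom a)
    (h : π.inMainLocal (sp.sim π [] a).1) : (⟨sp.go π⟩ : PreProof).inMainLocal a := by
  refine ⟨hdom, ?_⟩
  intro b j hpre t' hgo
  replace hgo : sp.go π b = some t' := hgo
  obtain ⟨tin, hlin, hcase⟩ := go_tag hgo
  have hwit : t'.witness j = tin.witness j ∧ t'.progress j = tin.progress j := by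
    rcases hcase with ⟨-, rfl, -⟩ | ⟨-, rfl⟩
    · exact ⟨sp.adjust_witness tin j, sp.adjust_progress tin j⟩
    · exact ⟨rfl, rfl⟩
  have hsub : (sp.sim π [] b).1 ++ [j] <+: (sp.sim π [] a).1 := by
    obtain ⟨d, rfl⟩ := hpre
    have h1 : (sp.sim π [] b).1 ++ [j] <+: (sp.sim π [] (b ++ [j])).1 := by
      rcases snoc_master (sp := sp) (π := π) b j with ⟨act, heq⟩ | ⟨t2, k, hl2, hg2, heq⟩
      · rw [heq]
      · rw [heq]; exact List.prefix_append _ _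
    exact h1.trans (B_mono (b ++ [j]) d)
  have := h.2 _ j hsub tin hlin
  rw [hwit.1, hwit.2]
  exact this

theorem Fn_concl (G : sp.Good) (Hwf : π.Wf) {S : Sequent} (hc : π.Concl S)
    (hmem : sp.θ ∈ sp.slot S) : (sp.Fn π).Concl (sp.Op S) := by
  obtain ⟨t0, hl0, hc0⟩ := hc
  have hpres : sp.θ ∈ sp.slot t0.concl := by rw [hc0]; exact hmem
  have hI : sp.initAct π = true := by
    unfold initAct
    rw [hl0]
    exact decide_eq_true hpres
  rw [Fn, if_pos hI]
  show ∃ t, sp.go π [] = some t ∧ t.concl = sp.Op S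
  cases hg : sp.gIdx t0 with
  | none =>
    refine ⟨sp.adjust t0, ?_, ?_⟩
    · rw [go_eq' (sim_nil_act hl0 hg), if_pos rfl, hl0]
      rfl
    · rw [sp.adjust_concl G hpres hg, hc0]
  | some k =>
    have hdom : π.dom ([] ++ [k]) := (Hwf.arity [] t0 hl0 k).2 (G.hgraft t0 k hg).2.1
    obtain ⟨t1, hl1⟩ : ∃ t1, π.label ([] ++ [k]) = some t1 := by
      cases hv : π.label ([] ++ [k]) with
      | none => exact absurd hv hdom
      | some t1 => exact ⟨t1, rfl⟩
    refine ⟨t1, ?_, ?_⟩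
    · rw [go_eq' (sim_nil_skip hl0 hg), if_neg Bool.false_ne_true]
      exact hl1
    · rw [Hwf.coherent [] t0 k t1 hl0 hl1, (G.hgraft t0 k hg).1, hc0]

end Spec
end InvAux
namespace InvAux
namespace Spec

variable {sp : Spec} {π : PreProof}

theorem Fn_progress (G : sp.Good) (Hwf : π.Wf) (Hpr : π.ProgressCond) :
    (sp.Fn π).ProgressCond := by
  by_cases hI : sp.initAct π = true
  swap
  · rw [Fn, if_neg hI]; exact Hpr
  rw [Fn, if_pos hI]
  intro f hf N
  obtain ⟨b, hb⟩ : ∃ b : ℕ → List ℕ,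
      ∀ n, b n = (sp.sim π [] (PreProof.branchPrefix f n)).1 := ⟨_, fun _ => rfl⟩
  have hdomb : ∀ n, π.dom (b n) := fun n => by rw [hb]; exact (dom_go _).1 (hf n)
  have hbp : ∀ n, PreProof.branchPrefix f (n + 1) = PreProof.branchPrefix f n ++ [f n] := by
    intro n
    simp [PreProof.branchPrefix, List.range_succ]
  have hstep : ∀ n, b (n + 1) = b n ++ [f n] ∨
      ∃ t2 k, π.label (b n ++ [f n]) = some t2 ∧ sp.gIdx t2 = some k ∧
        b (n + 1) = b n ++ [f n] ++ [k] := by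
    intro n
    rw [hb, hb, hbp n]
    rcases snoc_master (sp := sp) (π := π) (PreProof.branchPrefix f n) (f n) with
      ⟨act, heq⟩ | ⟨t2, k, hl2, hg2, heq⟩
    · left; rw [heq]
    · right; exact ⟨t2, k, hl2, hg2, by rw [heq]⟩
  have hmono : ∀ m n, m ≤ n → b m <+: b n := by
    intro m n h
    induction n with
    | zero =>
      obtain rfl := Nat.le_zero.1 h
      exact List.prefix_rfl
    | succ n ih =>
      rcases Nat.lt_or_ge m (n + 1) with h' | h'
      · refine (ih (Nat.lt_succ_iff.1 h')).trans ?_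
        rcases hstep n with he | ⟨t2, k, _, _, he⟩ <;> rw [he]
        · exact List.prefix_append _ _
        · exact ⟨[f n] ++ [k], by simp⟩
      · obtain rfl := le_antisymm h h'
        exact List.prefix_rfl
  have hlen1 : ∀ n, (b n).length < (b (n + 1)).length := by
    intro n
    rcases hstep n with he | ⟨t2, k, _, _, he⟩ <;> rw [he] <;> simp
  have hlenge : ∀ n, n ≤ (b n).length := by
    intro n
    induction n with
    | zero => exact Nat.zero_le _
    | succ n ih => have := hlen1 n; omega
  obtain ⟨g, hgdef⟩ : ∃ g : ℕ → ℕ, ∀ m, g m = (b (m + 1)).getD m 0 := ⟨_, fun _ => rfl⟩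
  have hgd : ∀ m n, m < n → g m = (b n).getD m 0 := by
    intro m n h
    rw [hgdef]
    obtain ⟨r, hr⟩ := hmono (m + 1) n h
    rw [← hr, List.getD_append _ _ _ _ (lt_of_lt_of_le (Nat.lt_succ_self m) (hlenge (m + 1)))]
  have htake : ∀ m n, m ≤ n → PreProof.branchPrefix g m = (b n).take m := by
    intro m
    induction m with
    | zero => intro n _; simp [PreProof.branchPrefix]
    | succ m ih =>
      intro n hmn
      have hb1 : PreProof.branchPrefix g (m + 1) = PreProof.branchPrefix g m ++ [g m] := by
        simp [PreProof.branchPrefix, List.range_succ]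
      have hmlt : m < (b n).length := lt_of_lt_of_le hmn (hlenge n)
      rw [hb1, ih n (le_of_lt hmn), hgd m n hmn,
        List.getD_eq_getElem _ _ hmlt, List.take_succ, List.getElem?_eq_getElem hmlt]
      rfl
  have hgbranch : π.IsBranch g := by
    intro m
    rw [htake m m le_rfl]
    obtain ⟨r, hr⟩ := List.take_prefix m (b m)
    exact dom_extend Hwf r _ (by rw [hr]; exact hdomb m)
  have hcover : ∀ m, (b 0).length ≤ m → ∃ n, (b n).length ≤ m ∧ m < (b (n + 1)).length := by
    intro m
    induction m with
    | zero =>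
      intro h
      exact ⟨0, h, by have := hlen1 0; omega⟩
    | succ m ih =>
      intro h
      rcases Nat.lt_or_ge m (b 0).length with h0 | h0
      · have he0 : (b 0).length = m + 1 := le_antisymm h h0
        exact ⟨0, h, he0 ▸ hlen1 0⟩
      · obtain ⟨n, h1, h2⟩ := ih h0
        rcases Nat.lt_or_ge (m + 1) ((b (n + 1)).length) with h3 | h3
        · exact ⟨n, Nat.le_succ_of_le h1, h3⟩
        · have he1 : (b (n + 1)).length = m + 1 := le_antisymm h3 h2
          exact ⟨n + 1, le_of_eq he1, he1 ▸ hlen1 (n + 1)⟩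
  obtain ⟨m, hmge, t, hlt, hpw⟩ := Hpr g hgbranch ((b (N + 1)).length)
  have h0m : (b 0).length ≤ m :=
    le_trans (List.IsPrefix.length_le (hmono 0 (N + 1) (Nat.zero_le _))) hmge
  obtain ⟨n, hn1, hn2⟩ := hcover m h0m
  have hNn : N ≤ n := by
    by_contra hc
    push_neg at hc
    have hle : (b (n + 1)).length ≤ (b (N + 1)).length :=
      (hmono (n + 1) (N + 1) (by omega)).length_le
    omega
  rcases Nat.lt_or_ge m ((b n).length + 1) with hcase | hcase
  · -- m = (b n).length : edge (b n, f n)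
    have hm : m = (b n).length := by omega
    have hbig : PreProof.branchPrefix g m = b n := by
      rw [htake m (m + n + 1) (by omega)]
      obtain ⟨r, hr⟩ := hmono n (m + n + 1) (by omega)
      rw [← hr, hm, List.take_left]
    have hgm : g m = f n := by
      rw [hgd m (m + n + 1) (by omega)]
      obtain ⟨r2, hr2⟩ := hmono (n + 1) (m + n + 1) (by omega)
      rw [← hr2]
      rcases hstep n with he | ⟨t2, k, _, _, he⟩
      · rw [he, hm, List.append_assoc, List.getD_append_right _ _ _ _ le_rfl, Nat.sub_self]
        rfl
      · rw [he, hm, List.append_assoc, List.append_assoc,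
          List.getD_append_right _ _ _ _ le_rfl, Nat.sub_self]
        rfl
    have hlabn : π.label (b n) = some t := by rw [← hbig]; exact hlt
    obtain ⟨t', hgo'⟩ : ∃ t', sp.go π (PreProof.branchPrefix f n) = some t' := by
      cases hv : sp.go π (PreProof.branchPrefix f n) with
      | none => exact absurd hv (hf n)
      | some t' => exact ⟨t', rfl⟩
    obtain ⟨tin, hlin, hcase2⟩ := go_tag hgo'
    have htin : tin = t := by
      rw [hb n] at hlabn
      exact Option.some.inj (hlin.symm.trans hlabn)
    subst htin
    refine ⟨n, hNn, t', hgo', ?_⟩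
    rw [hgm] at hpw
    rcases hcase2 with ⟨-, rfl, -⟩ | ⟨-, rfl⟩
    · rcases hpw with h | h
      · exact Or.inl (by rw [sp.adjust_progress]; exact h)
      · exact Or.inr (by rw [sp.adjust_witness]; exact h)
    · exact hpw.symm.symm
  · -- m = (b n).length + 1 : skip edge, contradiction
    rcases hstep n with he | ⟨t2, k, hl2, hg2, he⟩
    · exfalso
      rw [he] at hn2
      simp at hn2
      omega
    · have hm : m = (b n).length + 1 := by
        rw [he] at hn2
        simp at hn2
        omega
      have hbig : PreProof.branchPrefix g m = b n ++ [f n] := by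
        rw [htake m (m + n + 1) (by omega)]
        obtain ⟨r, hr⟩ := hmono (n + 1) (m + n + 1) (by omega)
        rw [← hr, he, hm, List.append_assoc (b n ++ [f n]),
          show (b n).length + 1 = (b n ++ [f n]).length by simp]
        exact List.take_left
      have hgm : g m = k := by
        rw [hgd m (m + n + 1) (by omega)]
        obtain ⟨r, hr⟩ := hmono (n + 1) (m + n + 1) (by omega)
        rw [← hr, he, hm, List.append_assoc (b n ++ [f n]),
          show (b n).length + 1 = (b n ++ [f n]).length by simp,
          List.getD_append_right _ _ _ _ le_rfl, Nat.sub_self]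
        rfl
      have ht2 : t = t2 := by
        rw [hbig] at hlt
        exact Option.some.inj (hlt.symm.trans hl2)
      subst ht2
      rw [hgm] at hpw
      exfalso
      rcases hpw with h | h
      · rw [(G.hgraft t k hg2).2.2.2] at h
        exact Bool.false_ne_true h
      · rw [(G.hgraft t k hg2).2.2.1] at h
        exact Bool.false_ne_true h

end Spec
end InvAux
namespace InvAux
namespace Spec

variable {sp : Spec} {π : PreProof}

theorem Fn_isProof (G : sp.Good) (h : π.IsProof) : (sp.Fn π).IsProof :=
  ⟨Fn_wf G h.1, Fn_progress G h.1 h.2.1,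
    let ⟨α, hα⟩ := h.2.2
    ⟨α, Fn_ordOk G h.1 hα⟩⟩

theorem Fn_eq_of_act (hI : sp.initAct π = true) : sp.Fn π = ⟨sp.go π⟩ := by
  rw [Fn, if_pos hI]

variable (sp)

theorem Fn_presOrd (G : sp.Good) : PreservesOrdHeight sp.Fn := by
  intro π hpf
  have hsub : {α : Ordinal.{0} | π.OrdOk α} ⊆ {α : Ordinal.{0} | (sp.Fn π).OrdOk α} :=
    fun α hα => Fn_ordOk G hpf.1 hα
  exact csInf_le_csInf (OrderBot.bddBelow _) hpf.2.2 hsub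

theorem Fn_presLocalHeight (G : sp.Good) : PreservesLocalHeight sp.Fn := by
  intro π hpf
  by_cases hI : sp.initAct π = true
  swap
  · rw [Fn, if_neg hI]
  rw [Fn_eq_of_act hI]
  unfold PreProof.localHeight
  refine iSup₂_le fun a ha => ?_
  have hmem : (sp.sim π [] a).1 ∈ {a : List ℕ | π.inMainLocal a} :=
    inMainLocal_fwd G hpf.1 hI ha
  calc ((a.length : ℕ∞)) ≤ (((sp.sim π [] a).1.length : ℕ∞)) := by
        have := sim_len (sp := sp) (π := π) a []
        simp at this
        exact_mod_cast this
    _ ≤ _ := le_iSup₂ (f := fun (c : List ℕ) (_ : c ∈ {a : List ℕ | π.inMainLocal a}) =>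
        (c.length : ℕ∞)) _ hmem

theorem Fn_presCutSizes : PreservesCutSizes sp.Fn := by
  intro n π hpf hcs
  by_cases hI : sp.initAct π = true
  swap
  · rw [Fn, if_neg hI]; exact hcs
  rw [Fn_eq_of_act hI]
  intro a t' χ hl hcf
  replace hl : sp.go π a = some t' := hl
  obtain ⟨t, hlin, hcase⟩ := go_tag hl
  have : t.cutFml = some χ := by
    rcases hcase with ⟨-, rfl, -⟩ | ⟨-, rfl⟩
    · rw [← sp.adjust_cutFml t]; exact hcf
    · exact hcf
  exact hcs _ t χ hlin this

theorem Fn_presMainLocalCutFree (G : sp.Good) : PreservesMainLocalCutFree sp.Fn := by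
  intro π hpf hnc
  by_cases hI : sp.initAct π = true
  swap
  · rw [Fn, if_neg hI]; exact hnc
  rw [Fn_eq_of_act hI]
  intro a t' hl hcut hml
  replace hl : sp.go π a = some t' := hl
  obtain ⟨t, hlin, hcase⟩ := go_tag hl
  have hcin : t.isCut := by
    rcases hcase with ⟨-, rfl, -⟩ | ⟨-, rfl⟩
    · exact (sp.adjust_isCut t).1 hcut
    · exact hcut
  exact hnc _ t hlin hcin (inMainLocal_fwd G hpf.1 hI hml)

theorem Fn_presCutLocality (G : sp.Good) : PreservesCutLocality sp.Fn := by
  intro π hlco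
  by_cases hI : sp.initAct π = true
  swap
  · rw [Fn, if_neg hI]; exact hlco
  refine ⟨Fn_isProof G hlco.1, ?_⟩
  rw [Fn_eq_of_act hI]
  intro a t' hl hcut
  replace hl : sp.go π a = some t' := hl
  obtain ⟨t, hlin, hcase⟩ := go_tag hl
  have hcin : t.isCut := by
    rcases hcase with ⟨-, rfl, -⟩ | ⟨-, rfl⟩
    · exact (sp.adjust_isCut t).1 hcut
    · exact hcut
  have hml : π.inMainLocal (sp.sim π [] a).1 := hlco.2 _ t hlin hcin
  refine inMainLocal_bwd hlco.1.1 ?_ hml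
  intro hn
  exact absurd (hl.symm.trans hn) (by simp)

theorem Fn_presWitnessCutLocality (G : sp.Good) : PreservesWitnessCutLocality sp.Fn := by
  intro π hpf hw τ hτ
  by_cases hI : sp.initAct π = true
  swap
  · rw [Fn, if_neg hI] at hτ; exact hw τ hτ
  rw [Fn_eq_of_act hI] at hτ
  obtain ⟨a, t', i, hmg, hl, hwit, hsub⟩ := hτ
  replace hl : sp.go π a = some t' := hl
  obtain ⟨t, hlin, hcase⟩ := go_tag hl
  have hwin : t.witness i = true := by
    rcases hcase with ⟨-, rfl, -⟩ | ⟨-, rfl⟩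
    · rw [← sp.adjust_witness t i]; exact hwit
    · exact hwit
  refine hw τ ⟨(sp.sim π [] a).1, t, i, inMainGlobal_fwd G hpf.1 hI hmg, hlin, hwin, ?_⟩
  rw [hsub]
  show PreProof.mk _ = PreProof.mk _
  congr 1
  funext c
  have h1 : (a ++ [i]) ++ c = a ++ (i :: c) := by simp
  have h2 : ((sp.sim π [] a).1 ++ [i]) ++ c = (sp.sim π [] a).1 ++ (i :: c) := by simp
  show sp.go π ((a ++ [i]) ++ c) = π.label (((sp.sim π [] a).1 ++ [i]) ++ c)
  rw [h1, h2]
  exact sub_witness hpf.1 hl hwit c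

theorem Fn_strong (G : sp.Good) : StronglyPreserving sp.Fn :=
  ⟨⟨Fn_presLocalHeight sp G, Fn_presCutSizes sp, Fn_presMainLocalCutFree sp G,
    Fn_presCutLocality sp G⟩, Fn_presOrd sp G, Fn_presWitnessCutLocality sp G⟩

theorem Fn_main (G : sp.Good) {S : Sequent} (hpf : π.IsProof) (hc : π.Concl S)
    (hmem : sp.θ ∈ sp.slot S) : (sp.Fn π).IsProof ∧ (sp.Fn π).Concl (sp.Op S) :=
  ⟨Fn_isProof G hpf, Fn_concl G hpf.1 hc hmem⟩

end Spec
end InvAux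
namespace InvAux

def spBot : Spec := ⟨.bot, false, 0, 0, fun _ => none⟩

theorem spBot_good : spBot.Good := by
  refine ⟨?_, ?_, ?_, ?_, ?_, ?_, ?_⟩
  · intro p h; exact Fml.noConfusion h
  · intro φ h; exact Fml.noConfusion h
  · intro φ h; exact Fml.noConfusion h
  · intro h; simp [spBot] at h
  · intro t k h; exact absurd h (by simp [spBot])
  · intro h; simp [spBot] at h
  · intro _ Γ φ ψ Δ s _ h; exact Fml.noConfusion h

def spL0 (χ₀ χ₁ : Fml) : Spec :=
  ⟨.imp χ₀ χ₁, true, 0, {χ₀}, fun t =>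
    match t with
    | .impL _ φ ψ _ _ => if φ = χ₀ ∧ ψ = χ₁ then some 0 else none
    | _ => none⟩

def spL1 (χ₀ χ₁ : Fml) : Spec :=
  ⟨.imp χ₀ χ₁, true, {χ₁}, 0, fun t =>
    match t with
    | .impL _ φ ψ _ _ => if φ = χ₀ ∧ ψ = χ₁ then some 1 else none
    | _ => none⟩

def spR (χ₀ χ₁ : Fml) : Spec :=
  ⟨.imp χ₀ χ₁, false, {χ₀}, {χ₁}, fun t =>
    match t with
    | .impR _ φ ψ _ _ => if φ = χ₀ ∧ ψ = χ₁ then some 0 else none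
    | _ => none⟩

theorem spL0_good (χ₀ χ₁ : Fml) : (spL0 χ₀ χ₁).Good := by
  refine ⟨?_, ?_, ?_, ?_, ?_, ?_, ?_⟩
  · intro p h; exact Fml.noConfusion h
  · intro φ h; exact Fml.noConfusion h
  · intro φ h; exact Fml.noConfusion h
  · intro _ h; exact Fml.noConfusion h
  · intro t k h
    cases t <;> simp only [spL0] at h <;> try cases h
    case impL Γ φ ψ Δ s =>
      by_cases hc : φ = χ₀ ∧ ψ = χ₁
      · obtain ⟨rfl, rfl⟩ := hc
        rw [if_pos ⟨rfl, rfl⟩] at h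
        obtain rfl : (0 : ℕ) = k := Option.some.inj h
        refine ⟨?_, by simp [Tag.arity], rfl, rfl⟩
        simp [Spec.Op, Spec.opL, Spec.opR, spL0, Tag.concl, Tag.prem]
      · rw [if_neg hc] at h
        exact absurd h (by simp)
  · intro _ Γ φ ψ Δ s h he
    obtain ⟨rfl, rfl⟩ := Fml.imp.inj he
    simp [spL0] at h
  · intro h; simp [spL0] at h

theorem spL1_good (χ₀ χ₁ : Fml) : (spL1 χ₀ χ₁).Good := by
  refine ⟨?_, ?_, ?_, ?_, ?_, ?_, ?_⟩
  · intro p h; exact Fml.noConfusion h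
  · intro φ h; exact Fml.noConfusion h
  · intro φ h; exact Fml.noConfusion h
  · intro _ h; exact Fml.noConfusion h
  · intro t k h
    cases t <;> simp only [spL1] at h <;> try cases h
    case impL Γ φ ψ Δ s =>
      by_cases hc : φ = χ₀ ∧ ψ = χ₁
      · obtain ⟨rfl, rfl⟩ := hc
        rw [if_pos ⟨rfl, rfl⟩] at h
        obtain rfl : (1 : ℕ) = k := Option.some.inj h
        refine ⟨?_, by simp [Tag.arity], rfl, rfl⟩
        simp [Spec.Op, Spec.opL, Spec.opR, spL1, Tag.concl, Tag.prem]
      · rw [if_neg hc] at h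
        exact absurd h (by simp)
  · intro _ Γ φ ψ Δ s h he
    obtain ⟨rfl, rfl⟩ := Fml.imp.inj he
    simp [spL1] at h
  · intro h; simp [spL1] at h

theorem spR_good (χ₀ χ₁ : Fml) : (spR χ₀ χ₁).Good := by
  refine ⟨?_, ?_, ?_, ?_, ?_, ?_, ?_⟩
  · intro p h; exact Fml.noConfusion h
  · intro φ h; exact Fml.noConfusion h
  · intro φ h; exact Fml.noConfusion h
  · intro h; simp [spR] at h
  · intro t k h
    cases t <;> simp only [spR] at h <;> try cases h
    case impR Γ φ ψ Δ s =>
      by_cases hc : φ = χ₀ ∧ ψ = χ₁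
      · obtain ⟨rfl, rfl⟩ := hc
        rw [if_pos ⟨rfl, rfl⟩] at h
        obtain rfl : (0 : ℕ) = k := Option.some.inj h
        refine ⟨?_, by simp [Tag.arity], rfl, rfl⟩
        simp [Spec.Op, Spec.opL, Spec.opR, spR, Tag.concl, Tag.prem]
      · rw [if_neg hc] at h
        exact absurd h (by simp)
  · intro h; simp [spR] at h
  · intro _ Γ φ ψ Δ s h he
    obtain ⟨rfl, rfl⟩ := Fml.imp.inj he
    simp [spR] at h

end InvAux

open InvAux in
/-- **Inversion**: there are strongly preserving functions `inv_⊥`, `linv⁰_{χ₀→χ₁}`,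
`linv¹_{χ₀→χ₁}` and `rinv_{χ₀→χ₁}` realizing the inversions of `⊥` on the right and
of the implication rules. -/
theorem inversion_exists (χ₀ χ₁ : Fml) :
    ∃ invBot linv0 linv1 rinv : PreProof → PreProof,
      StronglyPreserving invBot ∧ StronglyPreserving linv0 ∧
      StronglyPreserving linv1 ∧ StronglyPreserving rinv ∧
      (∀ (Γ Δ : Msf) (s : Ann) (π : PreProof), π.IsProof →
        π.Concl ⟨Γ, s, Fml.bot ::ₘ Δ⟩ →
        (invBot π).IsProof ∧ (invBot π).Concl ⟨Γ, s, Δ⟩) ∧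
      (∀ (Γ Δ : Msf) (s : Ann) (π : PreProof), π.IsProof →
        π.Concl ⟨Fml.imp χ₀ χ₁ ::ₘ Γ, s, Δ⟩ →
        (linv0 π).IsProof ∧ (linv0 π).Concl ⟨Γ, s, χ₀ ::ₘ Δ⟩) ∧
      (∀ (Γ Δ : Msf) (s : Ann) (π : PreProof), π.IsProof →
        π.Concl ⟨Fml.imp χ₀ χ₁ ::ₘ Γ, s, Δ⟩ →
        (linv1 π).IsProof ∧ (linv1 π).Concl ⟨χ₁ ::ₘ Γ, s, Δ⟩) ∧
      (∀ (Γ Δ : Msf) (s : Ann) (π : PreProof), π.IsProof →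
        π.Concl ⟨Γ, s, Fml.imp χ₀ χ₁ ::ₘ Δ⟩ →
        (rinv π).IsProof ∧ (rinv π).Concl ⟨χ₀ ::ₘ Γ, s, χ₁ ::ₘ Δ⟩) := by
  refine ⟨Spec.Fn spBot, Spec.Fn (spL0 χ₀ χ₁), Spec.Fn (spL1 χ₀ χ₁), Spec.Fn (spR χ₀ χ₁),
    Spec.Fn_strong _ spBot_good, Spec.Fn_strong _ (spL0_good χ₀ χ₁),
    Spec.Fn_strong _ (spL1_good χ₀ χ₁), Spec.Fn_strong _ (spR_good χ₀ χ₁),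
    ?_, ?_, ?_, ?_⟩
  · intro Γ Δ s π hπ hc
    obtain ⟨h1, h2⟩ := Spec.Fn_main spBot spBot_good hπ hc
      (by simp [spBot, Spec.slot])
    refine ⟨h1, ?_⟩
    rwa [show spBot.Op ⟨Γ, s, Fml.bot ::ₘ Δ⟩ = ⟨Γ, s, Δ⟩ from by
      simp [Spec.Op, Spec.opL, Spec.opR, spBot]] at h2
  · intro Γ Δ s π hπ hc
    obtain ⟨h1, h2⟩ := Spec.Fn_main (spL0 χ₀ χ₁) (spL0_good χ₀ χ₁) hπ hc
      (by simp [spL0, Spec.slot])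
    refine ⟨h1, ?_⟩
    rwa [show (spL0 χ₀ χ₁).Op ⟨Fml.imp χ₀ χ₁ ::ₘ Γ, s, Δ⟩ = ⟨Γ, s, χ₀ ::ₘ Δ⟩ from by
      simp [Spec.Op, Spec.opL, Spec.opR, spL0]] at h2
  · intro Γ Δ s π hπ hc
    obtain ⟨h1, h2⟩ := Spec.Fn_main (spL1 χ₀ χ₁) (spL1_good χ₀ χ₁) hπ hc
      (by simp [spL1, Spec.slot])
    refine ⟨h1, ?_⟩
    rwa [show (spL1 χ₀ χ₁).Op ⟨Fml.imp χ₀ χ₁ ::ₘ Γ, s, Δ⟩ = ⟨χ₁ ::ₘ Γ, s, Δ⟩ from by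
      simp [Spec.Op, Spec.opL, Spec.opR, spL1]] at h2
  · intro Γ Δ s π hπ hc
    obtain ⟨h1, h2⟩ := Spec.Fn_main (spR χ₀ χ₁) (spR_good χ₀ χ₁) hπ hc
      (by simp [spR, Spec.slot])
    refine ⟨h1, ?_⟩
    rwa [show (spR χ₀ χ₁).Op ⟨Γ, s, Fml.imp χ₀ χ₁ ::ₘ Δ⟩ = ⟨χ₀ ::ₘ Γ, s, χ₁ ::ₘ Δ⟩ from by
      simp [Spec.Op, Spec.opL, Spec.opR, spR]] at h2
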